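/- arXiv:2605.24759 — 9 statements merged into one kernel-verified Lean document; each statement's English description precedes it below -/
import Mathlib

section
/- Let S, U, R₁, R₂ be measurable spaces, let κ₁ be a Markov kernel from S to U × R₁ and κ₂ a Markov kernel from U to S × R₂, let ρ₁ : R₁ → ℝ and ρ₂ : R₂ → ℝ be measurable with |ρ_i| ≤ R_max, and let γ ∈ (0,1). Define T₁ : (bounded measurable U → ℝ) → (bounded measurable S → ℝ) by (T₁ W)(s) = ∫ (ρ₁(r₁) + γ·W(u)) dκ₁(s)(u, r₁), and T₂ : (bounded measurable S → ℝ) → (bounded measurable U → ℝ) by (T₂ V)(u) = ∫ (ρ₂(r₂) + γ·V(s₂)) dκ₂(u)(s₂, r₂). Then for every bounded measurable V : S → ℝ and every s ∈ S, (T₁(T₂ V))(s) = ∫ ρ₁(r₁) dκ₁(s)(u, r₁) + γ · ∫∫ ρ₂(r₂) dκ₂(u)(s₂, r₂) dκ₁(s)(u, r₁) + γ² · ∫∫ V(s₂) dκ₂(u)(s₂, r₂) dκ₁(s)(u, r₁), i.e. the second-stage reward is discounted once more and the continuation twice. Moreover sup_s |(T₁(T₂ V))(s) − (T₁(T₂ W))(s)|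 ≤ γ² · sup_s |V(s) − W(s)| for all bounded measurable V, W, so T₁ ∘ T₂ is a γ²-contraction in the sup norm. -/
open MeasureTheory ProbabilityTheory

/-- The typed Bellman transformer of an open component: a kernel `κ : X ⇝ Y × R` with
scalarization `ρ` and discount `γ` pulls a continuation on `Y` back to a value on `X`. -/
noncomputable def bellmanT {X Y R : Type*}
    [MeasurableSpace X] [MeasurableSpace Y] [MeasurableSpace R]
    (κ : Kernel X (Y × R)) (ρ : R → ℝ) (γ : ℝ) (V : Y → ℝ) : X → ℝ :=
  fun x => ∫ p : Y × R, (ρ p.2 + γ * V p.1) ∂(κ x)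

section Aux

variable {X Y R : Type*} [MeasurableSpace X] [MeasurableSpace Y] [MeasurableSpace R]

lemma integrable_of_bdd {α : Type*} [MeasurableSpace α] {μ : Measure α} [IsProbabilityMeasure μ]
    {f : α → ℝ} (hf : Measurable f) {M : ℝ} (h : ∀ a, |f a| ≤ M) : Integrable f μ :=
  (integrable_const M).mono' hf.aestronglyMeasurable
    (Filter.Eventually.of_forall fun a => by simpa [Real.norm_eq_abs] using h a)

lemma bellmanT_eq (κ : Kernel X (Y × R)) [IsMarkovKernel κ]
    {ρ : R → ℝ} (hρ : Measurable ρ) {Mρ : ℝ} (hρbd : ∀ r, |ρ r| ≤ Mρ)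
    (γ : ℝ) {V : Y → ℝ} (hV : Measurable V) {MV : ℝ} (hVbd : ∀ y, |V y| ≤ MV) (x : X) :
    bellmanT κ ρ γ V x = (∫ p : Y × R, ρ p.2 ∂(κ x)) + γ * ∫ p : Y × R, V p.1 ∂(κ x) := by
  unfold bellmanT
  have h1 : Integrable (fun p : Y × R => ρ p.2) (κ x) :=
    integrable_of_bdd (f := fun p : Y × R => ρ p.2) (hρ.comp measurable_snd) (fun p => hρbd p.2)
  have h2 : Integrable (fun p : Y × R => V p.1) (κ x) :=
    integrable_of_bdd (f := fun p : Y × R => V p.1) (hV.comp measurable_fst) (fun p => hVbd p.1)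
  rw [integral_add h1 (h2.const_mul γ), integral_const_mul]

lemma bellmanT_measurable (κ : Kernel X (Y × R)) [IsMarkovKernel κ]
    {ρ : R → ℝ} (hρ : Measurable ρ) (γ : ℝ) {V : Y → ℝ} (hV : Measurable V) :
    Measurable (bellmanT κ ρ γ V) := by
  have : StronglyMeasurable (fun q : X × (Y × R) => ρ q.2.2 + γ * V q.2.1) :=
    ((hρ.comp (measurable_snd.snd)).add
      ((hV.comp (measurable_snd.fst)).const_mul γ)).stronglyMeasurable
  exact this.integral_kernel_prod_right'.measurable

lemma bellmanT_bdd (κ : Kernel X (Y × R)) [IsMarkovKernel κ]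
    {ρ : R → ℝ} {Mρ : ℝ} (hρbd : ∀ r, |ρ r| ≤ Mρ)
    {γ : ℝ} {V : Y → ℝ} {MV : ℝ} (hVbd : ∀ y, |V y| ≤ MV) (x : X) :
    |bellmanT κ ρ γ V x| ≤ Mρ + |γ| * MV := by
  unfold bellmanT
  have h : ∀ p : Y × R, ‖ρ p.2 + γ * V p.1‖ ≤ Mρ + |γ| * MV := by
    intro p
    have h1 : |γ * V p.1| ≤ |γ| * MV := by
      rw [abs_mul]
      exact mul_le_mul_of_nonneg_left (hVbd p.1) (abs_nonneg γ)
    calc ‖ρ p.2 + γ * V p.1‖ ≤ |ρ p.2| + |γ * V p.1| := abs_add_le _ _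
      _ ≤ Mρ + |γ| * MV := add_le_add (hρbd p.2) h1
  rw [← Real.norm_eq_abs]
  calc ‖∫ p : Y × R, (ρ p.2 + γ * V p.1) ∂(κ x)‖
      ≤ (Mρ + |γ| * MV) * (κ x Set.univ).toReal :=
        norm_integral_le_of_norm_le_const (Filter.Eventually.of_forall h)
    _ = Mρ + |γ| * MV := by simp

lemma measurable_inner_integral (κ : Kernel X (Y × R)) [IsMarkovKernel κ]
    {f : Y × R → ℝ} (hf : Measurable f) :
    Measurable (fun x => ∫ q : Y × R, f q ∂(κ x)) := by
  have : StronglyMeasurable (fun q : X × (Y × R) => f q.2) :=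
    (hf.comp measurable_snd).stronglyMeasurable
  exact this.integral_kernel_prod_right'.measurable

end Aux

/-- **Compositionality under series wiring.**
For two micro-step components wired in series through an interface `U`, the composed
transformer unfolds with explicit discount bookkeeping: the second-stage reward is
discounted once more and the continuation twice; moreover the composition is a
`γ²`-contraction in the sup norm. -/
theorem bellman_series_compositionality
    {S U R₁ R₂ : Type*}
    [MeasurableSpace S] [MeasurableSpace U] [MeasurableSpace R₁] [MeasurableSpace R₂]
    (κ₁ : Kernel S (U × R₁)) [IsMarkovKernel κ₁]
    (κ₂ : Kernel U (S × R₂)) [IsMarkovKernel κ₂]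
    (ρ₁ : R₁ → ℝ) (ρ₂ : R₂ → ℝ) (hρ₁ : Measurable ρ₁) (hρ₂ : Measurable ρ₂)
    (Rmax : ℝ) (hρ₁bd : ∀ r, |ρ₁ r| ≤ Rmax) (hρ₂bd : ∀ r, |ρ₂ r| ≤ Rmax)
    (γ : ℝ) (hγ0 : 0 < γ) (hγ1 : γ < 1) :
    (∀ V : S → ℝ, Measurable V → (∃ M : ℝ, ∀ s, |V s| ≤ M) → ∀ s : S,
      bellmanT κ₁ ρ₁ γ (bellmanT κ₂ ρ₂ γ V) s =
        (∫ p : U × R₁, ρ₁ p.2 ∂(κ₁ s))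
        + γ * (∫ p : U × R₁, (∫ q : S × R₂, ρ₂ q.2 ∂(κ₂ p.1)) ∂(κ₁ s))
        + γ ^ 2 * (∫ p : U × R₁, (∫ q : S × R₂, V q.1 ∂(κ₂ p.1)) ∂(κ₁ s))) ∧
    (∀ V W : S → ℝ, Measurable V → Measurable W →
      (∃ M : ℝ, ∀ s, |V s| ≤ M) → (∃ M : ℝ, ∀ s, |W s| ≤ M) →
      ∀ D : ℝ, (∀ s, |V s - W s| ≤ D) →
        ∀ s : S, |bellmanT κ₁ ρ₁ γ (bellmanT κ₂ ρ₂ γ V) s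
                  - bellmanT κ₁ ρ₁ γ (bellmanT κ₂ ρ₂ γ W) s| ≤ γ ^ 2 * D) := by
  have key : ∀ V : S → ℝ, Measurable V → ∀ M : ℝ, (∀ s, |V s| ≤ M) → ∀ s : S,
      bellmanT κ₁ ρ₁ γ (bellmanT κ₂ ρ₂ γ V) s =
        (∫ p : U × R₁, ρ₁ p.2 ∂(κ₁ s))
        + γ * (∫ p : U × R₁, (∫ q : S × R₂, ρ₂ q.2 ∂(κ₂ p.1)) ∂(κ₁ s))
        + γ ^ 2 * (∫ p : U × R₁, (∫ q : S × R₂, V q.1 ∂(κ₂ p.1)) ∂(κ₁ s)) := by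
    intro V hV M hVbd s
    have hWmeas := bellmanT_measurable κ₂ hρ₂ γ hV
    have hWbd := fun u => bellmanT_bdd κ₂ hρ₂bd (γ := γ) hVbd u
    rw [bellmanT_eq κ₁ hρ₁ hρ₁bd γ hWmeas hWbd s]
    have hsplit : ∀ p : U × R₁, bellmanT κ₂ ρ₂ γ V p.1 =
        (∫ q : S × R₂, ρ₂ q.2 ∂(κ₂ p.1)) + γ * ∫ q : S × R₂, V q.1 ∂(κ₂ p.1) :=
      fun p => bellmanT_eq κ₂ hρ₂ hρ₂bd γ hV hVbd p.1
    have hmA : Measurable (fun u : U => ∫ q : S × R₂, ρ₂ q.2 ∂(κ₂ u)) :=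
      measurable_inner_integral κ₂ (hρ₂.comp measurable_snd)
    have hmB : Measurable (fun u : U => ∫ q : S × R₂, V q.1 ∂(κ₂ u)) :=
      measurable_inner_integral κ₂ (hV.comp measurable_fst)
    have hbA : ∀ u : U, |∫ q : S × R₂, ρ₂ q.2 ∂(κ₂ u)| ≤ Rmax := by
      intro u
      rw [← Real.norm_eq_abs]
      calc ‖∫ q : S × R₂, ρ₂ q.2 ∂(κ₂ u)‖ ≤ Rmax * (κ₂ u Set.univ).toReal :=
            norm_integral_le_of_norm_le_const (Filter.Eventually.of_forall fun q => by
              simpa [Real.norm_eq_abs] using hρ₂bd q.2)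
        _ = Rmax := by simp
    have hbB : ∀ u : U, |∫ q : S × R₂, V q.1 ∂(κ₂ u)| ≤ M := by
      intro u
      rw [← Real.norm_eq_abs]
      calc ‖∫ q : S × R₂, V q.1 ∂(κ₂ u)‖ ≤ M * (κ₂ u Set.univ).toReal :=
            norm_integral_le_of_norm_le_const (Filter.Eventually.of_forall fun q => by
              simpa [Real.norm_eq_abs] using hVbd q.1)
        _ = M := by simp
    have hIA : Integrable (fun p : U × R₁ => ∫ q : S × R₂, ρ₂ q.2 ∂(κ₂ p.1)) (κ₁ s) :=
      integrable_of_bdd (hmA.comp measurable_fst) (fun p => hbA p.1)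
    have hIB : Integrable (fun p : U × R₁ => ∫ q : S × R₂, V q.1 ∂(κ₂ p.1)) (κ₁ s) :=
      integrable_of_bdd (hmB.comp measurable_fst) (fun p => hbB p.1)
    have : (∫ p : U × R₁, bellmanT κ₂ ρ₂ γ V p.1 ∂(κ₁ s)) =
        (∫ p : U × R₁, (∫ q : S × R₂, ρ₂ q.2 ∂(κ₂ p.1)) ∂(κ₁ s))
        + γ * (∫ p : U × R₁, (∫ q : S × R₂, V q.1 ∂(κ₂ p.1)) ∂(κ₁ s)) := by
      simp_rw [hsplit]
      rw [integral_add hIA (hIB.const_mul γ), integral_const_mul]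
    rw [this]; ring
  refine ⟨fun V hV ⟨M, hM⟩ s => key V hV M hM s, ?_⟩
  intro V W hV hW ⟨MV, hMV⟩ ⟨MW, hMW⟩ D hD s
  rw [key V hV MV hMV s, key W hW MW hMW s]
  have hmV : Measurable (fun u : U => ∫ q : S × R₂, V q.1 ∂(κ₂ u)) :=
    measurable_inner_integral κ₂ (hV.comp measurable_fst)
  have hmW : Measurable (fun u : U => ∫ q : S × R₂, W q.1 ∂(κ₂ u)) :=
    measurable_inner_integral κ₂ (hW.comp measurable_fst)
  have hbV : ∀ u : U, |∫ q : S × R₂, V q.1 ∂(κ₂ u)| ≤ MV := by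
    intro u
    rw [← Real.norm_eq_abs]
    calc ‖∫ q : S × R₂, V q.1 ∂(κ₂ u)‖ ≤ MV * (κ₂ u Set.univ).toReal :=
          norm_integral_le_of_norm_le_const (Filter.Eventually.of_forall fun q => by
            simpa [Real.norm_eq_abs] using hMV q.1)
      _ = MV := by simp
  have hbW : ∀ u : U, |∫ q : S × R₂, W q.1 ∂(κ₂ u)| ≤ MW := by
    intro u
    rw [← Real.norm_eq_abs]
    calc ‖∫ q : S × R₂, W q.1 ∂(κ₂ u)‖ ≤ MW * (κ₂ u Set.univ).toReal :=
          norm_integral_le_of_norm_le_const (Filter.Eventually.of_forall fun q => by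
            simpa [Real.norm_eq_abs] using hMW q.1)
      _ = MW := by simp
  have hIV : Integrable (fun p : U × R₁ => ∫ q : S × R₂, V q.1 ∂(κ₂ p.1)) (κ₁ s) :=
    integrable_of_bdd (hmV.comp measurable_fst) (fun p => hbV p.1)
  have hIW : Integrable (fun p : U × R₁ => ∫ q : S × R₂, W q.1 ∂(κ₂ p.1)) (κ₁ s) :=
    integrable_of_bdd (hmW.comp measurable_fst) (fun p => hbW p.1)
  have hdiff : ∀ u : U,
      |(∫ q : S × R₂, V q.1 ∂(κ₂ u)) - (∫ q : S × R₂, W q.1 ∂(κ₂ u))| ≤ D := by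
    intro u
    have hIVu : Integrable (fun q : S × R₂ => V q.1) (κ₂ u) :=
      integrable_of_bdd (hV.comp measurable_fst) (fun q => hMV q.1)
    have hIWu : Integrable (fun q : S × R₂ => W q.1) (κ₂ u) :=
      integrable_of_bdd (hW.comp measurable_fst) (fun q => hMW q.1)
    rw [← integral_sub hIVu hIWu, ← Real.norm_eq_abs]
    calc ‖∫ q : S × R₂, (V q.1 - W q.1) ∂(κ₂ u)‖ ≤ D * (κ₂ u Set.univ).toReal :=
          norm_integral_le_of_norm_le_const (Filter.Eventually.of_forall fun q => by
            simpa [Real.norm_eq_abs] using hD q.1)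
      _ = D := by simp
  have houter :
      |(∫ p : U × R₁, (∫ q : S × R₂, V q.1 ∂(κ₂ p.1)) ∂(κ₁ s))
        - (∫ p : U × R₁, (∫ q : S × R₂, W q.1 ∂(κ₂ p.1)) ∂(κ₁ s))| ≤ D := by
    rw [← integral_sub hIV hIW, ← Real.norm_eq_abs]
    calc ‖∫ p : U × R₁, ((∫ q : S × R₂, V q.1 ∂(κ₂ p.1))
            - (∫ q : S × R₂, W q.1 ∂(κ₂ p.1))) ∂(κ₁ s)‖
        ≤ D * (κ₁ s Set.univ).toReal :=
          norm_integral_le_of_norm_le_const (Filter.Eventually.of_forall fun p => by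
            simpa [Real.norm_eq_abs] using hdiff p.1)
      _ = D := by simp
  have hγ2 : (0:ℝ) ≤ γ ^ 2 := sq_nonneg γ
  calc |(∫ p : U × R₁, ρ₁ p.2 ∂(κ₁ s))
        + γ * (∫ p : U × R₁, (∫ q : S × R₂, ρ₂ q.2 ∂(κ₂ p.1)) ∂(κ₁ s))
        + γ ^ 2 * (∫ p : U × R₁, (∫ q : S × R₂, V q.1 ∂(κ₂ p.1)) ∂(κ₁ s))
        - ((∫ p : U × R₁, ρ₁ p.2 ∂(κ₁ s))
        + γ * (∫ p : U × R₁, (∫ q : S × R₂, ρ₂ q.2 ∂(κ₂ p.1)) ∂(κ₁ s))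
        + γ ^ 2 * (∫ p : U × R₁, (∫ q : S × R₂, W q.1 ∂(κ₂ p.1)) ∂(κ₁ s)))|
      = γ ^ 2 * |(∫ p : U × R₁, (∫ q : S × R₂, V q.1 ∂(κ₂ p.1)) ∂(κ₁ s))
        - (∫ p : U × R₁, (∫ q : S × R₂, W q.1 ∂(κ₂ p.1)) ∂(κ₁ s))| := by
        have heq : ∀ a b x y : ℝ, a + b + γ ^ 2 * x - (a + b + γ ^ 2 * y) = γ ^ 2 * (x - y) :=
          fun a b x y => by ring
        rw [heq, abs_mul, abs_of_nonneg hγ2]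
    _ ≤ γ ^ 2 * D := mul_le_mul_of_nonneg_left houter hγ2
end

section
/- Let S₁, S₂, R₁, R₂ be measurable spaces, let κ₁ be a Markov kernel from S₁ to S₁ × R₁ and κ₂ a Markov kernel from S₂ to S₂ × R₂, let ρ₁ : R₁ → ℝ and ρ₂ : R₂ → ℝ be bounded measurable, and let γ ∈ (0,1). Define the product kernel κ from S₁ × S₂ to (S₁ × R₁) × (S₂ × R₂) by κ(s₁, s₂) = κ₁(s₁) ⊗ κ₂(s₂) (product measure), and the parallel Bellman operator (T_⊗ F)(s₁, s₂) = ∫ (ρ₁(r₁) + ρ₂(r₂) + γ·F(s₁', s₂')) dκ(s₁,s₂)((s₁', r₁), (s₂', r₂)) on bounded measurable F : S₁ × S₂ → ℝ, and let T_i be the Bellman operator (T_i V)(s) = ∫ (ρ_i(r) + γ·V(s')) dκ_i(s)(s', r) for i = 1, 2. Then for all bounded measurable V₁ : S₁ → ℝ and V₂ : S₂ → ℝ, T_⊗(V₁ ⊕ V₂) = (T₁ V₁) ⊕ (T₂ V₂), where (V₁ ⊕ V₂)(s₁, s₂) := V₁(s₁) + V₂(s₂). Consequently, if V₁ and V₂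 are bounded measurable fixed points of T₁ and T₂ respectively, then V₁ ⊕ V₂ is a fixed point of T_⊗. -/
open MeasureTheory ProbabilityTheory

/-- The Bellman operator of a closed-loop component on state space `S` with reward signal
space `R`. -/
noncomputable def bellman {S R : Type*} [MeasurableSpace S] [MeasurableSpace R]
    (κ : Kernel S (S × R)) (ρ : R → ℝ) (γ : ℝ) (V : S → ℝ) : S → ℝ :=
  fun s => ∫ p : S × R, (ρ p.2 + γ * V p.1) ∂(κ s)

/-- The parallel Bellman operator on the product state space, with product kernel and
additive scalarization. -/
noncomputable def bellmanPar {S₁ S₂ R₁ R₂ : Type*}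
    [MeasurableSpace S₁] [MeasurableSpace S₂] [MeasurableSpace R₁] [MeasurableSpace R₂]
    (κ₁ : Kernel S₁ (S₁ × R₁)) (κ₂ : Kernel S₂ (S₂ × R₂))
    (ρ₁ : R₁ → ℝ) (ρ₂ : R₂ → ℝ) (γ : ℝ) (F : S₁ × S₂ → ℝ) : S₁ × S₂ → ℝ :=
  fun s => ∫ p : (S₁ × R₁) × (S₂ × R₂),
    (ρ₁ p.1.2 + ρ₂ p.2.2 + γ * F (p.1.1, p.2.1)) ∂((κ₁ s.1).prod (κ₂ s.2))

/-- **Additive factorization under parallel wiring.**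
On separable continuations `(V₁ ⊕ V₂)(s₁,s₂) = V₁ s₁ + V₂ s₂`, the parallel Bellman
operator factorizes as the sum of the component Bellman operators; consequently the sum
of fixed points is a fixed point of the parallel operator. -/
theorem bellman_parallel_additive_factorization
    {S₁ S₂ R₁ R₂ : Type*}
    [MeasurableSpace S₁] [MeasurableSpace S₂] [MeasurableSpace R₁] [MeasurableSpace R₂]
    (κ₁ : Kernel S₁ (S₁ × R₁)) [IsMarkovKernel κ₁]
    (κ₂ : Kernel S₂ (S₂ × R₂)) [IsMarkovKernel κ₂]
    (ρ₁ : R₁ → ℝ) (ρ₂ : R₂ → ℝ) (hρ₁ : Measurable ρ₁) (hρ₂ : Measurable ρ₂)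
    (Rmax : ℝ) (hρ₁bd : ∀ r, |ρ₁ r| ≤ Rmax) (hρ₂bd : ∀ r, |ρ₂ r| ≤ Rmax)
    (γ : ℝ) (hγ0 : 0 < γ) (hγ1 : γ < 1) :
    (∀ (V₁ : S₁ → ℝ) (V₂ : S₂ → ℝ), Measurable V₁ → Measurable V₂ →
      (∃ M : ℝ, ∀ s, |V₁ s| ≤ M) → (∃ M : ℝ, ∀ s, |V₂ s| ≤ M) →
      ∀ s : S₁ × S₂,
        bellmanPar κ₁ κ₂ ρ₁ ρ₂ γ (fun q => V₁ q.1 + V₂ q.2) s =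
          bellman κ₁ ρ₁ γ V₁ s.1 + bellman κ₂ ρ₂ γ V₂ s.2) ∧
    (∀ (V₁ : S₁ → ℝ) (V₂ : S₂ → ℝ), Measurable V₁ → Measurable V₂ →
      (∃ M : ℝ, ∀ s, |V₁ s| ≤ M) → (∃ M : ℝ, ∀ s, |V₂ s| ≤ M) →
      bellman κ₁ ρ₁ γ V₁ = V₁ → bellman κ₂ ρ₂ γ V₂ = V₂ →
      bellmanPar κ₁ κ₂ ρ₁ ρ₂ γ (fun q => V₁ q.1 + V₂ q.2) =
        fun q => V₁ q.1 + V₂ q.2) := by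
  have key : ∀ (V₁ : S₁ → ℝ) (V₂ : S₂ → ℝ), Measurable V₁ → Measurable V₂ →
      (∃ M : ℝ, ∀ s, |V₁ s| ≤ M) → (∃ M : ℝ, ∀ s, |V₂ s| ≤ M) →
      ∀ s : S₁ × S₂,
        bellmanPar κ₁ κ₂ ρ₁ ρ₂ γ (fun q => V₁ q.1 + V₂ q.2) s =
          bellman κ₁ ρ₁ γ V₁ s.1 + bellman κ₂ ρ₂ γ V₂ s.2 := by
    rintro V₁ V₂ hV₁ hV₂ ⟨M₁, hM₁⟩ ⟨M₂, hM₂⟩ s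
    set f : S₁ × R₁ → ℝ := fun a => ρ₁ a.2 + γ * V₁ a.1 with hf
    set g : S₂ × R₂ → ℝ := fun b => ρ₂ b.2 + γ * V₂ b.1 with hg
    have hfm : Measurable f := (hρ₁.comp measurable_snd).add
      (measurable_const.mul (hV₁.comp measurable_fst))
    have hgm : Measurable g := (hρ₂.comp measurable_snd).add
      (measurable_const.mul (hV₂.comp measurable_fst))
    have hint1 : Integrable (fun p : (S₁ × R₁) × (S₂ × R₂) => f p.1)
        ((κ₁ s.1).prod (κ₂ s.2)) := by
      refine (integrable_const (Rmax + |γ| * M₁)).mono'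
        (hfm.comp measurable_fst).aestronglyMeasurable ?_
      filter_upwards with p
      have := hρ₁bd p.1.2
      have := hM₁ p.1.1
      have h1 : |γ * V₁ p.1.1| ≤ |γ| * M₁ := by
        rw [abs_mul]
        exact mul_le_mul_of_nonneg_left (hM₁ p.1.1) (abs_nonneg γ)
      calc ‖f p.1‖ = |ρ₁ p.1.2 + γ * V₁ p.1.1| := rfl
        _ ≤ |ρ₁ p.1.2| + |γ * V₁ p.1.1| := abs_add_le _ _
        _ ≤ Rmax + |γ| * M₁ := add_le_add (hρ₁bd p.1.2) h1
    have hint2 : Integrable (fun p : (S₁ × R₁) × (S₂ × R₂) => g p.2)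
        ((κ₁ s.1).prod (κ₂ s.2)) := by
      refine (integrable_const (Rmax + |γ| * M₂)).mono'
        (hgm.comp measurable_snd).aestronglyMeasurable ?_
      filter_upwards with p
      have h1 : |γ * V₂ p.2.1| ≤ |γ| * M₂ := by
        rw [abs_mul]
        exact mul_le_mul_of_nonneg_left (hM₂ p.2.1) (abs_nonneg γ)
      calc ‖g p.2‖ = |ρ₂ p.2.2 + γ * V₂ p.2.1| := rfl
        _ ≤ |ρ₂ p.2.2| + |γ * V₂ p.2.1| := abs_add_le _ _
        _ ≤ Rmax + |γ| * M₂ := add_le_add (hρ₂bd p.2.2) h1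
    have heq : ∀ p : (S₁ × R₁) × (S₂ × R₂),
        ρ₁ p.1.2 + ρ₂ p.2.2 + γ * (V₁ p.1.1 + V₂ p.2.1) = f p.1 + g p.2 := by
      intro p; simp only [hf, hg]; ring
    calc bellmanPar κ₁ κ₂ ρ₁ ρ₂ γ (fun q => V₁ q.1 + V₂ q.2) s
        = ∫ p : (S₁ × R₁) × (S₂ × R₂), (f p.1 + g p.2) ∂((κ₁ s.1).prod (κ₂ s.2)) := by
          unfold bellmanPar; exact integral_congr_ae (Filter.Eventually.of_forall heq)
      _ = (∫ p : (S₁ × R₁) × (S₂ × R₂), f p.1 ∂((κ₁ s.1).prod (κ₂ s.2)))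
          + ∫ p : (S₁ × R₁) × (S₂ × R₂), g p.2 ∂((κ₁ s.1).prod (κ₂ s.2)) :=
          integral_add hint1 hint2
      _ = bellman κ₁ ρ₁ γ V₁ s.1 + bellman κ₂ ρ₂ γ V₂ s.2 := by
          rw [MeasureTheory.integral_fun_fst (f := f), MeasureTheory.integral_fun_snd (f := g)]
          simp [bellman, f, g]
  refine ⟨key, ?_⟩
  intro V₁ V₂ hV₁ hV₂ hb₁ hb₂ hfix₁ hfix₂
  funext q
  rw [key V₁ V₂ hV₁ hV₂ hb₁ hb₂ q, hfix₁, hfix₂]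
end

section
/- Let X, Y, Z be metric spaces with Z nonempty and complete, let α ∈ [0,1), β ≥ 0, δ ≥ 0, and let F_Y, F'_Y : X → Z → Y and F_Z, F'_Z : X → Z → Z. Assume: (i) for every x, both z ↦ F_Z x z and z ↦ F'_Z x z are Lipschitz with constant α; (ii) for every x, z ↦ F'_Y x z is Lipschitz with constant β; (iii) for all x and z, dist(F_Y x z, F'_Y x z) ≤ δ and dist(F_Z x z, F'_Z x z) ≤ δ. For each x let z_x and z'_x be the unique fixed points of z ↦ F_Z x z and z ↦ F'_Z x z respectively. Then for every x ∈ X, dist(F_Y x z_x, F'_Y x z'_x) ≤ (1 + β/(1−α))·δ. -/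
/-- **Trace-node discrepancy amplification.**
If two guarded feedback maps share the contraction modulus `α < 1` on the feedback wire,
the second output component is `β`-Lipschitz in the feedback variable, and both components
of the two maps differ by at most `δ` uniformly, then the traced outputs differ by at most
`(1 + β/(1-α))·δ`. -/
theorem trace_discrepancy_amplification
    {X Y Z : Type*} [MetricSpace X] [MetricSpace Y] [MetricSpace Z]
    [Nonempty Z] [CompleteSpace Z]
    (FY FY' : X → Z → Y) (FZ FZ' : X → Z → Z)
    (α β δ : ℝ) (hα0 : 0 ≤ α) (hα1 : α < 1) (hβ : 0 ≤ β) (hδ0 : 0 ≤ δ)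
    (hFZ : ∀ x z z', dist (FZ x z) (FZ x z') ≤ α * dist z z')
    (hFZ' : ∀ x z z', dist (FZ' x z) (FZ' x z') ≤ α * dist z z')
    (hFY'z : ∀ x z z', dist (FY' x z) (FY' x z') ≤ β * dist z z')
    (hYδ : ∀ x z, dist (FY x z) (FY' x z) ≤ δ)
    (hZδ : ∀ x z, dist (FZ x z) (FZ' x z) ≤ δ)
    (zfix zfix' : X → Z)
    (hfix : ∀ x, zfix x = FZ x (zfix x))
    (hfix' : ∀ x, zfix' x = FZ' x (zfix' x)) :
    ∀ x, dist (FY x (zfix x)) (FY' x (zfix' x)) ≤ (1 + β / (1 - α)) * δ := by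
  intro x
  have h1α : (0:ℝ) < 1 - α := by linarith
  set z := zfix x
  set z' := zfix' x
  have hd : dist z z' ≤ δ / (1 - α) := by
    have h : dist z z' ≤ δ + α * dist z z' := by
      calc dist z z' = dist (FZ x z) (FZ' x z') := by rw [← hfix, ← hfix']
        _ ≤ dist (FZ x z) (FZ' x z) + dist (FZ' x z) (FZ' x z') := dist_triangle _ _ _
        _ ≤ δ + α * dist z z' := add_le_add (hZδ x z) (hFZ' x z z')
    rw [le_div_iff₀ h1α]
    nlinarith
  calc dist (FY x z) (FY' x z')
      ≤ dist (FY x z) (FY' x z) + dist (FY' x z) (FY' x z') := dist_triangle _ _ _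
    _ ≤ δ + β * (δ / (1 - α)) := add_le_add (hYδ x z)
        ((hFY'z x z z').trans (by nlinarith))
    _ = (1 + β / (1 - α)) * δ := by field_simp
end

section
/- Let S, Ŝ, A be measurable spaces, let φ : S → Ŝ be measurable, let P be a Markov kernel from S × A to S and P̂ a Markov kernel from Ŝ × A to Ŝ, let r : S × A → ℝ and r̂ : Ŝ × A → ℝ be bounded measurable, let γ ∈ (0,1), and let π̂ be a Markov kernel from Ŝ to A; define the lifted policy π(s) := π̂(φ(s)). Assume the homomorphism conditions: r(s,a) = r̂(φ(s), a) for all (s,a), and the pushforward of P(s,a) under φ equals P̂(φ(s), a) for all (s,a). Define the policy-evaluation Bellman operators (T V)(s) = ∫_A (r(s,a) + γ·∫_S V(s') dP(s,a)(s')) dπ(s)(a) on bounded measurable V : S → ℝ, and (T̂ V̂)(ŝ) = ∫_A (r̂(ŝ,a) + γ·∫_{Ŝ} V̂(ŝ') dP̂(ŝ,a)(ŝ')) dπ̂(ŝ)(a) on bounded measurable V̂ : Ŝ → ℝ. Then for every bounded measurable V̂ : Ŝ → ℝ, T(V̂ ∘ φ) = (T̂ V̂) ∘ φ. -/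
open MeasureTheory ProbabilityTheory

/-- The policy-evaluation Bellman operator of transitions `P`, reward `r`, policy `π`,
and discount `γ`: `(T V)(s) = ∫_A (r(s,a) + γ ∫ V(s') dP(s,a)(s')) dπ(s)(a)`. -/
noncomputable def policyEval {S A : Type*} [MeasurableSpace S] [MeasurableSpace A]
    (P : Kernel (S × A) S) (r : S × A → ℝ) (π : Kernel S A) (γ : ℝ)
    (V : S → ℝ) : S → ℝ :=
  fun s => ∫ a, (r (s, a) + γ * ∫ s', V s' ∂(P (s, a))) ∂(π s)

/-- **Bellman intertwining under a homomorphism.**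
If `φ : S → Sh` preserves rewards (`r(s,a) = rh(φ s, a)`) and intertwines the transitions
(`φ_# P(·|s,a) = Ph(·|φ s, a)`), and the lifted concrete policy is `s ↦ πh (φ s)`, then
for every bounded measurable `Vh`, `T (Vh ∘ φ) = (Th Vh) ∘ φ`. -/
theorem bellman_intertwining_homomorphism
    {S Sh A : Type*} [MeasurableSpace S] [MeasurableSpace Sh] [MeasurableSpace A]
    (φ : S → Sh) (hφ : Measurable φ)
    (P : Kernel (S × A) S) [IsMarkovKernel P]
    (Ph : Kernel (Sh × A) Sh) [IsMarkovKernel Ph]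
    (r : S × A → ℝ) (rh : Sh × A → ℝ)
    (hr : Measurable r) (hrh : Measurable rh)
    (hrbd : ∃ M : ℝ, ∀ p, |r p| ≤ M) (hrhbd : ∃ M : ℝ, ∀ p, |rh p| ≤ M)
    (γ : ℝ) (hγ0 : 0 < γ) (hγ1 : γ < 1)
    (πh : Kernel Sh A) [IsMarkovKernel πh]
    (hom_r : ∀ s a, r (s, a) = rh (φ s, a))
    (hom_P : ∀ s a, (P (s, a)).map φ = Ph (φ s, a)) :
    ∀ Vh : Sh → ℝ, Measurable Vh → (∃ M : ℝ, ∀ sh, |Vh sh| ≤ M) →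
      ∀ s, policyEval P r (πh.comap φ hφ) γ (Vh ∘ φ) s = policyEval Ph rh πh γ Vh (φ s) := by
  intro Vh hVh _ s
  unfold policyEval
  rw [Kernel.comap_apply]
  refine integral_congr_ae (Filter.Eventually.of_forall fun a => ?_)
  simp only []
  rw [hom_r, ← hom_P, integral_map hφ.aemeasurable hVh.aestronglyMeasurable]
  rfl
end

section
/- Let S, Ŝ, A be measurable spaces, φ : S → Ŝ measurable, P a Markov kernel from S × A to S, P̂ a Markov kernel from Ŝ × A to Ŝ, r and r̂ bounded measurable rewards with |r| ≤ R_max and |r̂| ≤ R_max, γ ∈ (0,1), π̂ a Markov kernel from Ŝ to A, and π(s) := π̂(φ(s)). Assume the homomorphism conditions r(s,a) = r̂(φ(s),a) and φ_# P(s,a) = P̂(φ(s),a) for all (s,a). Let T and T̂ be the policy-evaluation Bellman operators of (P, r, π) and (P̂, r̂, π̂) respectively, and let V̂ : Ŝ → ℝ be a bounded measurable fixed point of T̂. Then V̂ ∘ φ is a bounded measurable fixed point of T; consequently, if V : S → ℝ is any bounded measurable fixed point of T, then V(s) = V̂(φ(s)) for all s ∈ S. -/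
/-!
Pushing `P(s, a)` forward along `φ` turns integrals of `Vh ∘ φ` against `P(s, a)` into integrals
of `Vh` against `Ph(φ s, a)`, so the concrete Bellman operator applied to `Vh ∘ φ` is the abstract
one applied to `Vh`, composed with `φ`; hence `Vh ∘ φ` is a concrete fixed point. With bounded
measurable rewards and Markov kernels the concrete operator is a `γ`-contraction on bounded
measurable functions, so it has at most one such fixed point.
-/

open MeasureTheory ProbabilityTheory

open Filter

lemma abs_integral_le_of_forall_abs_le {α : Type*} [MeasurableSpace α] {μ : Measure α}
    [IsProbabilityMeasure μ] {f : α → ℝ} {C : ℝ} (h : ∀ x, |f x| ≤ C) :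
    |∫ x, f x ∂μ| ≤ C := by
  simpa using norm_integral_le_of_norm_le_const (μ := μ) (f := f) (.of_forall h)

lemma Measurable.integrable_of_forall_abs_le {α : Type*} [MeasurableSpace α] {μ : Measure α}
    [IsFiniteMeasure μ] {f : α → ℝ} (hf : Measurable f) {C : ℝ} (h : ∀ x, |f x| ≤ C) :
    Integrable f μ :=
  .of_bound hf.aestronglyMeasurable C (.of_forall h)

lemma eq_zero_of_forall_abs_le_imp_abs_le_mul {X : Type*} {f : X → ℝ} {γ C : ℝ}
    (hγ0 : 0 ≤ γ) (hγ1 : γ < 1) (hC : ∀ x, |f x| ≤ C)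
    (hcontr : ∀ c, (∀ x, |f x| ≤ c) → ∀ x, |f x| ≤ γ * c) : f = 0 := by
  have hpow : ∀ n : ℕ, ∀ x, |f x| ≤ γ ^ n * C := by
    intro n
    induction n with
    | zero => simpa using hC
    | succ n ih => simpa [pow_succ, mul_comm, mul_left_comm] using hcontr _ ih
  have hlim : Tendsto (fun n : ℕ => γ ^ n * C) atTop (nhds 0) := by
    simpa using (tendsto_pow_atTop_nhds_zero_of_lt_one hγ0 hγ1).mul_const C
  funext x
  exact abs_nonpos_iff.mp (ge_of_tendsto' hlim fun n => hpow n x)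

section PolicyEval

variable {S Sh A : Type*} [MeasurableSpace S] [MeasurableSpace Sh] [MeasurableSpace A]

theorem policyEval_comp {φ : S → Sh} (hφ : Measurable φ) {P : Kernel (S × A) S}
    {Ph : Kernel (Sh × A) Sh} {r : S × A → ℝ} {rh : Sh × A → ℝ} (π : Kernel Sh A) (γ : ℝ)
    (hom_r : ∀ s a, r (s, a) = rh (φ s, a)) (hom_P : ∀ s a, (P (s, a)).map φ = Ph (φ s, a))
    {V : Sh → ℝ} (hV : Measurable V) :
    policyEval P r (π.comap φ hφ) γ (V ∘ φ) = policyEval Ph rh π γ V ∘ φ := by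
  funext s
  have hpush : ∀ a, ∫ s', V (φ s') ∂(P (s, a)) = ∫ t, V t ∂(Ph (φ s, a)) := fun a => by
    rw [← hom_P, integral_map hφ.aemeasurable hV.aestronglyMeasurable]
  simp only [policyEval, Kernel.comap_apply, Function.comp_apply, hom_r, hpush]

variable (P : Kernel (S × A) S) [IsMarkovKernel P] {r : S × A → ℝ} (π : Kernel S A)
  [IsMarkovKernel π] {γ : ℝ}

lemma integrable_policyEval_integrand (hr : Measurable r) {R : ℝ} (hrb : ∀ p, |r p| ≤ R)
    {V : S → ℝ} (hV : Measurable V) {M : ℝ} (hVb : ∀ s, |V s| ≤ M) (s : S) :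
    Integrable (fun a => r (s, a) + γ * ∫ s', V s' ∂(P (s, a))) (π s) := by
  have hint : Measurable fun a => ∫ s', V s' ∂(P (s, a)) :=
    ((hV.comp measurable_snd).stronglyMeasurable.integral_kernel_prod_right''
      (η := P) (a := s)).measurable
  refine Integrable.add ((hr.comp measurable_prodMk_left).integrable_of_forall_abs_le
    fun a => hrb _) (Integrable.const_mul ?_ γ)
  exact hint.integrable_of_forall_abs_le fun a => abs_integral_le_of_forall_abs_le hVb

lemma abs_policyEval_sub_le (hr : Measurable r) {R : ℝ} (hrb : ∀ p, |r p| ≤ R) (hγ : 0 ≤ γ)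
    {U V : S → ℝ} (hU : Measurable U) (hV : Measurable V) {MU MV : ℝ}
    (hUb : ∀ s, |U s| ≤ MU) (hVb : ∀ s, |V s| ≤ MV) {c : ℝ} (hc : ∀ s, |U s - V s| ≤ c)
    (s : S) : |policyEval P r π γ U s - policyEval P r π γ V s| ≤ γ * c := by
  have hdiff : policyEval P r π γ U s - policyEval P r π γ V s
      = ∫ a, γ * ∫ s', (U s' - V s') ∂(P (s, a)) ∂(π s) := by
    rw [policyEval, policyEval, ← integral_sub
      (integrable_policyEval_integrand P π hr hrb hU hUb s)
      (integrable_policyEval_integrand P π hr hrb hV hVb s)]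
    refine integral_congr_ae (.of_forall fun a => ?_)
    dsimp only
    rw [integral_sub (hU.integrable_of_forall_abs_le hUb) (hV.integrable_of_forall_abs_le hVb)]
    ring
  rw [hdiff]
  refine abs_integral_le_of_forall_abs_le fun a => ?_
  rw [abs_mul, abs_of_nonneg hγ]
  exact mul_le_mul_of_nonneg_left (abs_integral_le_of_forall_abs_le hc) hγ

theorem eq_of_policyEval_eq_self (hr : Measurable r) {R : ℝ} (hrb : ∀ p, |r p| ≤ R)
    (hγ0 : 0 ≤ γ) (hγ1 : γ < 1) {U V : S → ℝ} (hU : Measurable U) (hV : Measurable V)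
    {MU MV : ℝ} (hUb : ∀ s, |U s| ≤ MU) (hVb : ∀ s, |V s| ≤ MV)
    (hUfix : policyEval P r π γ U = U) (hVfix : policyEval P r π γ V = V) : U = V := by
  have hbound : ∀ s, |(U - V) s| ≤ MU + MV := fun s =>
    (abs_sub _ _).trans (add_le_add (hUb s) (hVb s))
  refine sub_eq_zero.mp (eq_zero_of_forall_abs_le_imp_abs_le_mul hγ0 hγ1 hbound ?_)
  intro c hc s
  have := abs_policyEval_sub_le P π hr hrb hγ0 hU hV hUb hVb hc s
  rwa [hUfix, hVfix] at this

end PolicyEval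

theorem exact_abstraction_preserves_values_general
    {S Sh A : Type*} [MeasurableSpace S] [MeasurableSpace Sh] [MeasurableSpace A]
    (φ : S → Sh) (hφ : Measurable φ)
    (P : Kernel (S × A) S) [IsMarkovKernel P]
    (Ph : Kernel (Sh × A) Sh)
    (r : S × A → ℝ) (rh : Sh × A → ℝ)
    (hr : Measurable r)
    (Rmax : ℝ) (hrbd : ∀ p, |r p| ≤ Rmax)
    (γ : ℝ) (hγ0 : 0 < γ) (hγ1 : γ < 1)
    (πh : Kernel Sh A) [IsMarkovKernel πh]
    (hom_r : ∀ s a, r (s, a) = rh (φ s, a))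
    (hom_P : ∀ s a, (P (s, a)).map φ = Ph (φ s, a))
    (Vh : Sh → ℝ) (hVhmeas : Measurable Vh) (hVhbd : ∃ M : ℝ, ∀ sh, |Vh sh| ≤ M)
    (hVhfix : policyEval Ph rh πh γ Vh = Vh) :
    policyEval P r (πh.comap φ hφ) γ (Vh ∘ φ) = Vh ∘ φ ∧
    (∀ V : S → ℝ, Measurable V → (∃ M : ℝ, ∀ s, |V s| ≤ M) →
      policyEval P r (πh.comap φ hφ) γ V = V → ∀ s, V s = Vh (φ s)) := by
  obtain ⟨M, hM⟩ := hVhbd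
  have hfix : policyEval P r (πh.comap φ hφ) γ (Vh ∘ φ) = Vh ∘ φ := by
    rw [policyEval_comp hφ πh γ hom_r hom_P hVhmeas, hVhfix]
  refine ⟨hfix, fun V hV ⟨MV, hMV⟩ hVfix s => ?_⟩
  exact congrFun (eq_of_policyEval_eq_self P (πh.comap φ hφ) hr hrbd hγ0.le hγ1 hV
    (hVhmeas.comp hφ) hMV (fun s => hM (φ s)) hVfix hfix) s

/-- **Exact abstraction preserves policy values.**
Under the homomorphism conditions, the pullback `Vh ∘ φ` of an abstract bounded measurable
fixed point `Vh` of the abstract policy-evaluation operator is a fixed point of the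
concrete operator; consequently any bounded measurable concrete fixed point `V` satisfies
`V s = Vh (φ s)` for all `s`. -/
theorem exact_abstraction_preserves_values
    {S Sh A : Type*} [MeasurableSpace S] [MeasurableSpace Sh] [MeasurableSpace A]
    (φ : S → Sh) (hφ : Measurable φ)
    (P : Kernel (S × A) S) [IsMarkovKernel P]
    (Ph : Kernel (Sh × A) Sh) [IsMarkovKernel Ph]
    (r : S × A → ℝ) (rh : Sh × A → ℝ)
    (hr : Measurable r) (hrh : Measurable rh)
    (Rmax : ℝ) (hrbd : ∀ p, |r p| ≤ Rmax) (hrhbd : ∀ p, |rh p| ≤ Rmax)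
    (γ : ℝ) (hγ0 : 0 < γ) (hγ1 : γ < 1)
    (πh : Kernel Sh A) [IsMarkovKernel πh]
    (hom_r : ∀ s a, r (s, a) = rh (φ s, a))
    (hom_P : ∀ s a, (P (s, a)).map φ = Ph (φ s, a))
    (Vh : Sh → ℝ) (hVhmeas : Measurable Vh) (hVhbd : ∃ M : ℝ, ∀ sh, |Vh sh| ≤ M)
    (hVhfix : policyEval Ph rh πh γ Vh = Vh) :
    policyEval P r (πh.comap φ hφ) γ (Vh ∘ φ) = Vh ∘ φ ∧
    (∀ V : S → ℝ, Measurable V → (∃ M : ℝ, ∀ s, |V s| ≤ M) →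
      policyEval P r (πh.comap φ hφ) γ V = V → ∀ s, V s = Vh (φ s)) :=
  exact_abstraction_preserves_values_general φ hφ P Ph r rh hr Rmax hrbd γ hγ0 hγ1 πh hom_r hom_P Vh
    hVhmeas hVhbd hVhfix
end

section
/- Let S, Ŝ be measurable spaces, let A be a nonempty finite type, let φ : S → Ŝ be measurable, let P be a Markov kernel from S × A to S and P̂ a Markov kernel from Ŝ × A to Ŝ, let r : S × A → ℝ and r̂ : Ŝ × A → ℝ be bounded measurable, and let γ ∈ (0,1). Assume r(s,a) = r̂(φ(s),a) and φ_# P(s,a) = P̂(φ(s),a) for all (s,a). Define the Bellman optimality operators (T* V)(s) = max_{a∈A} (r(s,a) + γ·∫ V(s') dP(s,a)(s')) and (T̂* V̂)(ŝ) = max_{a∈A} (r̂(ŝ,a) + γ·∫ V̂(ŝ') dP̂(ŝ,a)(ŝ')). Then for every bounded measurable V̂ : Ŝ → ℝ, T*(V̂ ∘ φ) = (T̂* V̂) ∘ φ. -/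
open MeasureTheory ProbabilityTheory

/-- The Bellman optimality operator with a finite action space: maximize over actions the
one-step reward plus discounted expected continuation. -/
noncomputable def optBellman {S A : Type*} [MeasurableSpace S] [MeasurableSpace A]
    [Fintype A] [Nonempty A]
    (P : Kernel (S × A) S) (r : S × A → ℝ) (γ : ℝ) (V : S → ℝ) : S → ℝ :=
  fun s => ⨆ a : A, (r (s, a) + γ * ∫ s', V s' ∂(P (s, a)))

/-- **Optimality intertwining (finite actions).**
If `φ : S → Sh` preserves rewards and intertwines the transitions, then the Bellman
optimality operators satisfy `T* (Vh ∘ φ) = (Th* Vh) ∘ φ` for every bounded measurable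
`Vh`. -/
theorem optimality_intertwining
    {S Sh A : Type*} [MeasurableSpace S] [MeasurableSpace Sh] [MeasurableSpace A]
    [Fintype A] [Nonempty A]
    (φ : S → Sh) (hφ : Measurable φ)
    (P : Kernel (S × A) S) [IsMarkovKernel P]
    (Ph : Kernel (Sh × A) Sh) [IsMarkovKernel Ph]
    (r : S × A → ℝ) (rh : Sh × A → ℝ)
    (hr : Measurable r) (hrh : Measurable rh)
    (hrbd : ∃ M : ℝ, ∀ p, |r p| ≤ M) (hrhbd : ∃ M : ℝ, ∀ p, |rh p| ≤ M)
    (γ : ℝ) (hγ0 : 0 < γ) (hγ1 : γ < 1)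
    (hom_r : ∀ s a, r (s, a) = rh (φ s, a))
    (hom_P : ∀ s a, (P (s, a)).map φ = Ph (φ s, a)) :
    ∀ Vh : Sh → ℝ, Measurable Vh → (∃ M : ℝ, ∀ sh, |Vh sh| ≤ M) →
      optBellman P r γ (Vh ∘ φ) = (optBellman Ph rh γ Vh) ∘ φ := by
  intro Vh hVh _
  funext s
  unfold optBellman
  simp only [Function.comp]
  congr 1
  funext a
  rw [hom_r s a, ← hom_P s a,
    integral_map hφ.aemeasurable hVh.aestronglyMeasurable]
end

section
/- Let S, Ŝ, A be measurable spaces, φ : S → Ŝ measurable, P a Markov kernel from S × A to S, P̂ a Markov kernel from Ŝ × A to Ŝ, r : S × A → ℝ and r̂ : Ŝ × A → ℝ measurable with |r| ≤ R_max and |r̂| ≤ R_max, γ ∈ (0,1), and V_max := R_max/(1−γ). Let π̂ be a Markov kernel from Ŝ to A and π(s) := π̂(φ(s)), with policy-evaluation Bellman operators T (for P, r, π) and T̂ (for P̂, r̂, π̂). Assume: (i) |r(s,a) − r̂(φ(s),a)| ≤ ε_r for all (s,a); (ii) for every measurable f : Ŝ → ℝ with |f| ≤ 1 pointwise and every (s,a),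 |∫ f(φ(s')) dP(s,a)(s') − ∫ f(ŝ') dP̂(φ(s),a)(ŝ')| ≤ ε_P. Let V : S → ℝ and V̂ : Ŝ → ℝ be bounded measurable fixed points of T and T̂ respectively, with |V̂| ≤ V_max pointwise. Then sup_{s∈S} |V(s) − V̂(φ(s))| ≤ (ε_r + γ·V_max·ε_P)/(1−γ). -/
open MeasureTheory ProbabilityTheory

/-- **Approximate abstraction yields an explicit value bound.**
With uniform reward mismatch `ε_r` and uniform transition mismatch `ε_P` (total variation,
in test-function form) between the concrete model pushed along `φ` and the abstract model,
the fixed-point values of the concrete and abstract policy-evaluation operators satisfy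
`|V s − Vh (φ s)| ≤ (ε_r + γ·V_max·ε_P)/(1−γ)` uniformly in `s`, where
`V_max = R_max/(1−γ)`. -/
theorem approximate_abstraction_value_bound
    {S Sh A : Type*} [MeasurableSpace S] [MeasurableSpace Sh] [MeasurableSpace A]
    (φ : S → Sh) (hφ : Measurable φ)
    (P : Kernel (S × A) S) [IsMarkovKernel P]
    (Ph : Kernel (Sh × A) Sh) [IsMarkovKernel Ph]
    (r : S × A → ℝ) (rh : Sh × A → ℝ)
    (hr : Measurable r) (hrh : Measurable rh)
    (Rmax : ℝ) (hrbd : ∀ p, |r p| ≤ Rmax) (hrhbd : ∀ p, |rh p| ≤ Rmax)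
    (γ : ℝ) (hγ0 : 0 < γ) (hγ1 : γ < 1)
    (πh : Kernel Sh A) [IsMarkovKernel πh]
    (εr εP : ℝ)
    (hεr : ∀ s a, |r (s, a) - rh (φ s, a)| ≤ εr)
    (hεP : ∀ (f : Sh → ℝ), Measurable f → (∀ sh, |f sh| ≤ 1) → ∀ s a,
      |(∫ s', f (φ s') ∂(P (s, a))) - ∫ sh', f sh' ∂(Ph (φ s, a))| ≤ εP)
    (V : S → ℝ) (hVmeas : Measurable V) (hVbd : ∃ M : ℝ, ∀ s, |V s| ≤ M)
    (hVfix : policyEval P r (πh.comap φ hφ) γ V = V)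
    (Vh : Sh → ℝ) (hVhmeas : Measurable Vh)
    (hVhbd : ∀ sh, |Vh sh| ≤ Rmax / (1 - γ))
    (hVhfix : policyEval Ph rh πh γ Vh = Vh) :
    ∀ s, |V s - Vh (φ s)| ≤ (εr + γ * (Rmax / (1 - γ)) * εP) / (1 - γ) := by
  intro s₀
  have hne : Nonempty S := ⟨s₀⟩
  have hγ1' : (0:ℝ) < 1 - γ := by linarith
  set Vmax := Rmax / (1 - γ) with hVmaxdef
  have hVmax0 : 0 ≤ Vmax := le_trans (abs_nonneg _) (hVhbd (φ s₀))
  obtain ⟨M, hM⟩ := hVbd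
  have hM0 : 0 ≤ M := le_trans (abs_nonneg _) (hM s₀)
  have hbdd : BddAbove (Set.range fun s => |V s - Vh (φ s)|) := by
    refine ⟨M + Vmax, ?_⟩
    rintro _ ⟨s, rfl⟩
    calc |V s - Vh (φ s)| ≤ |V s| + |Vh (φ s)| := abs_sub _ _
      _ ≤ M + Vmax := add_le_add (hM s) (hVhbd _)
  set D := ⨆ s, |V s - Vh (φ s)| with hDdef
  have hDle : ∀ s, |V s - Vh (φ s)| ≤ D := fun s => le_ciSup hbdd s
  have hD0 : 0 ≤ D := le_trans (abs_nonneg _) (hDle s₀)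
  -- measurability of kernel integrals
  have hPint : Measurable fun p : S × A => ∫ s', V s' ∂(P p) := by
    have : StronglyMeasurable fun q : (S × A) × S => V q.2 :=
      (hVmeas.comp measurable_snd).stronglyMeasurable
    exact this.integral_kernel_prod_right'.measurable
  have hPhint : Measurable fun p : Sh × A => ∫ sh', Vh sh' ∂(Ph p) := by
    have : StronglyMeasurable fun q : (Sh × A) × Sh => Vh q.2 :=
      (hVhmeas.comp measurable_snd).stronglyMeasurable
    exact this.integral_kernel_prod_right'.measurable
  -- key per-state bound
  have key : ∀ s, |V s - Vh (φ s)| ≤ εr + γ * (Vmax * εP) + γ * D := by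
    intro s
    have hV := congrFun hVfix s
    have hVh := congrFun hVhfix (φ s)
    rw [← hV, ← hVh]
    simp only [policyEval, Kernel.comap_apply]
    -- integrands
    set f1 : A → ℝ := fun a => r (s, a) + γ * ∫ s', V s' ∂(P (s, a)) with hf1
    set f2 : A → ℝ := fun a => rh (φ s, a) + γ * ∫ sh', Vh sh' ∂(Ph (φ s, a)) with hf2
    have hf1m : Measurable f1 :=
      (hr.comp (measurable_const.prodMk measurable_id)).add
        ((hPint.comp (measurable_const.prodMk measurable_id)).const_mul γ)
    have hf2m : Measurable f2 :=
      (hrh.comp (measurable_const.prodMk measurable_id)).add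
        ((hPhint.comp (measurable_const.prodMk measurable_id)).const_mul γ)
    have hf1i : Integrable f1 (πh (φ s)) := by
      refine (integrable_const (Rmax + γ * M)).mono' hf1m.aestronglyMeasurable ?_
      refine ae_of_all _ fun a => ?_
      have h1 : |∫ s', V s' ∂(P (s, a))| ≤ M := by
        have := norm_integral_le_of_norm_le_const (μ := P (s, a)) (f := V) (C := M)
          (ae_of_all _ fun s' => by simpa [Real.norm_eq_abs] using hM s')
        simpa [Real.norm_eq_abs] using this
      have := hrbd (s, a)
      rw [Real.norm_eq_abs]
      calc |f1 a| ≤ |r (s, a)| + |γ * ∫ s', V s' ∂(P (s, a))| := abs_add_le _ _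
        _ ≤ Rmax + γ * M := by
            rw [abs_mul, abs_of_pos hγ0]
            exact add_le_add this (by nlinarith)
    have hf2i : Integrable f2 (πh (φ s)) := by
      refine (integrable_const (Rmax + γ * Vmax)).mono' hf2m.aestronglyMeasurable ?_
      refine ae_of_all _ fun a => ?_
      have h1 : |∫ sh', Vh sh' ∂(Ph (φ s, a))| ≤ Vmax := by
        have := norm_integral_le_of_norm_le_const (μ := Ph (φ s, a)) (f := Vh) (C := Vmax)
          (ae_of_all _ fun sh' => by simpa [Real.norm_eq_abs] using hVhbd sh')
        simpa [Real.norm_eq_abs] using this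
      rw [Real.norm_eq_abs]
      calc |f2 a| ≤ |rh (φ s, a)| + |γ * ∫ sh', Vh sh' ∂(Ph (φ s, a))| := abs_add_le _ _
        _ ≤ Rmax + γ * Vmax := by
            rw [abs_mul, abs_of_pos hγ0]
            exact add_le_add (hrhbd _) (by nlinarith)
    rw [← integral_sub hf1i hf2i]
    have hbound : ∀ a, ‖f1 a - f2 a‖ ≤ εr + γ * (Vmax * εP) + γ * D := by
      intro a
      have hΔ : |(∫ s', V s' ∂(P (s, a))) - ∫ sh', Vh sh' ∂(Ph (φ s, a))| ≤ D + Vmax * εP := by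
        have hVi : Integrable V (P (s, a)) := by
          refine (integrable_const M).mono' hVmeas.aestronglyMeasurable ?_
          exact ae_of_all _ fun s' => by simpa [Real.norm_eq_abs] using hM s'
        have hVhφi : Integrable (fun s' => Vh (φ s')) (P (s, a)) := by
          refine (integrable_const Vmax).mono' (hVhmeas.comp hφ).aestronglyMeasurable ?_
          exact ae_of_all _ fun s' => by simpa [Real.norm_eq_abs] using hVhbd (φ s')
        have hsplit : (∫ s', V s' ∂(P (s, a))) - ∫ sh', Vh sh' ∂(Ph (φ s, a))
            = (∫ s', (V s' - Vh (φ s')) ∂(P (s, a)))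
              + ((∫ s', Vh (φ s') ∂(P (s, a))) - ∫ sh', Vh sh' ∂(Ph (φ s, a))) := by
          rw [integral_sub hVi hVhφi]; ring
        have h1 : |∫ s', (V s' - Vh (φ s')) ∂(P (s, a))| ≤ D := by
          have := norm_integral_le_of_norm_le_const (μ := P (s, a))
            (f := fun s' => V s' - Vh (φ s')) (C := D)
            (ae_of_all _ fun s' => by simpa [Real.norm_eq_abs] using hDle s')
          simpa [Real.norm_eq_abs] using this
        have h2 : |(∫ s', Vh (φ s') ∂(P (s, a))) - ∫ sh', Vh sh' ∂(Ph (φ s, a))| ≤ Vmax * εP := by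
          rcases eq_or_lt_of_le hVmax0 with h0 | hpos
          · have hz : ∀ sh, Vh sh = 0 := fun sh =>
              abs_eq_zero.mp (le_antisymm (by rw [← h0] at hVhbd; exact hVhbd sh) (abs_nonneg _))
            simp [hz, ← h0]
          · have := hεP (fun sh => Vh sh / Vmax) (hVhmeas.div_const _)
              (fun sh => by
                rw [abs_div, abs_of_pos hpos, div_le_one hpos]; exact hVhbd sh) s a
            rw [integral_div, integral_div, div_sub_div_same, abs_div,
              abs_of_pos hpos, div_le_iff₀ hpos] at this
            linarith [this]
        calc |(∫ s', V s' ∂(P (s, a))) - ∫ sh', Vh sh' ∂(Ph (φ s, a))|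
            ≤ |∫ s', (V s' - Vh (φ s')) ∂(P (s, a))|
              + |(∫ s', Vh (φ s') ∂(P (s, a))) - ∫ sh', Vh sh' ∂(Ph (φ s, a))| := by
              rw [hsplit]; exact abs_add_le _ _
          _ ≤ D + Vmax * εP := add_le_add h1 h2
      have : f1 a - f2 a = (r (s, a) - rh (φ s, a))
          + γ * ((∫ s', V s' ∂(P (s, a))) - ∫ sh', Vh sh' ∂(Ph (φ s, a))) := by
        simp only [hf1, hf2]; ring
      rw [Real.norm_eq_abs, this]
      calc |(r (s, a) - rh (φ s, a))
            + γ * ((∫ s', V s' ∂(P (s, a))) - ∫ sh', Vh sh' ∂(Ph (φ s, a)))|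
          ≤ |r (s, a) - rh (φ s, a)|
            + |γ * ((∫ s', V s' ∂(P (s, a))) - ∫ sh', Vh sh' ∂(Ph (φ s, a)))| := abs_add_le _ _
        _ ≤ εr + γ * (Vmax * εP) + γ * D := by
            rw [abs_mul, abs_of_pos hγ0]
            have := hεr s a
            nlinarith [hΔ]
    have := norm_integral_le_of_norm_le_const (μ := πh (φ s))
      (f := fun a => f1 a - f2 a) (C := εr + γ * (Vmax * εP) + γ * D)
      (ae_of_all _ hbound)
    simpa [Real.norm_eq_abs] using this
  have hDfin : D ≤ (εr + γ * (Vmax * εP)) / (1 - γ) := by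
    have : D ≤ εr + γ * (Vmax * εP) + γ * D := ciSup_le key
    rw [le_div_iff₀ hγ1']
    linarith
  have := le_trans (hDle s₀) hDfin
  calc |V s₀ - Vh (φ s₀)| ≤ (εr + γ * (Vmax * εP)) / (1 - γ) := this
    _ = (εr + γ * Vmax * εP) / (1 - γ) := by ring
end

section
/- Let S, Ŝ, A be measurable spaces, φ : S → Ŝ measurable, P a Markov kernel from S × A to S, P̂ a Markov kernel from Ŝ × A to Ŝ, r : S × A → ℝ and r̂ : Ŝ × A → ℝ bounded measurable, γ ∈ (0,1), V_max ≥ 0, π̂ a Markov kernel from Ŝ to A, and π(s) := π̂(φ(s)), with policy-evaluation Bellman operators T (for P, r, π) and T̂ (for P̂, r̂, π̂). Assume |r(s,a) − r̂(φ(s),a)| ≤ ε_r for all (s,a), and that for every measurable f : Ŝ → ℝ with |f| ≤ 1 pointwise and every (s,a), |∫ f(φ(s')) dP(s,a)(s') − ∫ f(ŝ') dP̂(φ(s),a)(ŝ')| ≤ ε_P. Then for every measurable V̂ : Ŝ → ℝ with |V̂| ≤ V_max pointwise, sup_{s∈S} |T(V̂ ∘ φ)(s) − (T̂ V̂)(φ(s))|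 ≤ ε_r + γ·V_max·ε_P. -/
open MeasureTheory ProbabilityTheory

private lemma abs_int_le_int_abs {α : Type*} [MeasurableSpace α] (μ : Measure α) (f : α → ℝ) :
    |∫ x, f x ∂μ| ≤ ∫ x, |f x| ∂μ := by
  simpa [Real.norm_eq_abs] using norm_integral_le_integral_norm (μ := μ) f

/-- **Approximate commutation implies an intertwining defect bound.**
With uniform reward mismatch `ε_r` and uniform transition mismatch `ε_P` (total variation
in test-function form), for every measurable `Vh` with `|Vh| ≤ V_max` the adapted concrete
and abstract Bellman backups differ by at most `ε_r + γ·V_max·ε_P` uniformly. -/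
theorem approximate_commutation_defect_bound
    {S Sh A : Type*} [MeasurableSpace S] [MeasurableSpace Sh] [MeasurableSpace A]
    (φ : S → Sh) (hφ : Measurable φ)
    (P : Kernel (S × A) S) [IsMarkovKernel P]
    (Ph : Kernel (Sh × A) Sh) [IsMarkovKernel Ph]
    (r : S × A → ℝ) (rh : Sh × A → ℝ)
    (hr : Measurable r) (hrh : Measurable rh)
    (hrbd : ∃ M : ℝ, ∀ p, |r p| ≤ M) (hrhbd : ∃ M : ℝ, ∀ p, |rh p| ≤ M)
    (γ : ℝ) (hγ0 : 0 < γ) (hγ1 : γ < 1)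
    (Vmax : ℝ) (hVmax : 0 ≤ Vmax)
    (πh : Kernel Sh A) [IsMarkovKernel πh]
    (εr εP : ℝ)
    (hεr : ∀ s a, |r (s, a) - rh (φ s, a)| ≤ εr)
    (hεP : ∀ (f : Sh → ℝ), Measurable f → (∀ sh, |f sh| ≤ 1) → ∀ s a,
      |(∫ s', f (φ s') ∂(P (s, a))) - ∫ sh', f sh' ∂(Ph (φ s, a))| ≤ εP) :
    ∀ Vh : Sh → ℝ, Measurable Vh → (∀ sh, |Vh sh| ≤ Vmax) →
      ∀ s, |policyEval P r (πh.comap φ hφ) γ (Vh ∘ φ) s - policyEval Ph rh πh γ Vh (φ s)|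
        ≤ εr + γ * Vmax * εP := by
  intro Vh hVh hVhb s
  simp only [policyEval, Kernel.comap_apply, Function.comp]
  set μ := πh (φ s)
  -- measurability of the inner integrals
  have hmF : StronglyMeasurable fun p : S × A => ∫ s', Vh (φ s') ∂(P p) :=
    (((hVh.comp hφ).comp measurable_snd).stronglyMeasurable).integral_kernel_prod_right'
      (κ := P)
  have hmG : StronglyMeasurable fun q : Sh × A => ∫ sh', Vh sh' ∂(Ph q) :=
    ((hVh.comp measurable_snd).stronglyMeasurable).integral_kernel_prod_right' (κ := Ph)
  set F : A → ℝ := fun a => r (s, a) + γ * ∫ s', Vh (φ s') ∂(P (s, a)) with hF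
  set G : A → ℝ := fun a => rh (φ s, a) + γ * ∫ sh', Vh sh' ∂(Ph (φ s, a)) with hG
  -- pointwise bound on inner integral difference
  have hinner : ∀ a, |(∫ s', Vh (φ s') ∂(P (s, a))) - ∫ sh', Vh sh' ∂(Ph (φ s, a))|
      ≤ Vmax * εP := by
    intro a
    rcases eq_or_lt_of_le hVmax with h0 | h0
    · have hVh0 : ∀ sh, Vh sh = 0 := fun sh =>
        abs_eq_zero.mp (le_antisymm (h0 ▸ hVhb sh) (abs_nonneg _))
      simp [hVh0, ← h0]
    · have := hεP (fun sh => Vh sh / Vmax) (hVh.div_const Vmax)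
        (fun sh => by
          rw [abs_div, abs_of_pos h0, div_le_one h0]; exact hVhb sh) s a
      rw [integral_div, integral_div, div_sub_div_same, abs_div, abs_of_pos h0,
        div_le_iff₀ h0] at this
      linarith [this]
  -- pointwise bound on F - G
  have hpt : ∀ a, |F a - G a| ≤ εr + γ * Vmax * εP := by
    intro a
    have : F a - G a = (r (s, a) - rh (φ s, a))
        + γ * ((∫ s', Vh (φ s') ∂(P (s, a))) - ∫ sh', Vh sh' ∂(Ph (φ s, a))) := by
      simp [hF, hG]; ring
    rw [this]
    calc _ ≤ |r (s, a) - rh (φ s, a)|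
          + |γ * ((∫ s', Vh (φ s') ∂(P (s, a))) - ∫ sh', Vh sh' ∂(Ph (φ s, a)))| :=
        abs_add_le _ _
      _ ≤ εr + γ * (Vmax * εP) := by
        refine add_le_add (hεr s a) ?_
        rw [abs_mul, abs_of_pos hγ0]
        exact mul_le_mul_of_nonneg_left (hinner a) hγ0.le
      _ = εr + γ * Vmax * εP := by ring
  -- integrability of F and G
  obtain ⟨M, hM⟩ := hrbd
  obtain ⟨M', hM'⟩ := hrhbd
  have hbint : ∀ a, |∫ s', Vh (φ s') ∂(P (s, a))| ≤ Vmax := fun a => by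
    calc |∫ s', Vh (φ s') ∂(P (s, a))| ≤ ∫ s', |Vh (φ s')| ∂(P (s, a)) :=
      abs_int_le_int_abs _ _
    _ ≤ ∫ _s', Vmax ∂(P (s, a)) := by
        refine integral_mono_of_nonneg (Filter.Eventually.of_forall fun _ => abs_nonneg _)
          (integrable_const _) (Filter.Eventually.of_forall fun s' => hVhb (φ s'))
    _ = Vmax := by simp
  have hbint' : ∀ a, |∫ sh', Vh sh' ∂(Ph (φ s, a))| ≤ Vmax := fun a => by
    calc |∫ sh', Vh sh' ∂(Ph (φ s, a))| ≤ ∫ sh', |Vh sh'| ∂(Ph (φ s, a)) :=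
      abs_int_le_int_abs _ _
    _ ≤ ∫ _sh', Vmax ∂(Ph (φ s, a)) := by
        refine integral_mono_of_nonneg (Filter.Eventually.of_forall fun _ => abs_nonneg _)
          (integrable_const _) (Filter.Eventually.of_forall fun sh' => hVhb sh')
    _ = Vmax := by simp
  have hFmeas : AEStronglyMeasurable F μ := by
    refine (hr.comp (measurable_const.prodMk measurable_id)).stronglyMeasurable
      |>.add ?_ |>.aestronglyMeasurable
    exact stronglyMeasurable_const.mul
      (hmF.comp_measurable (measurable_const.prodMk measurable_id))
  have hGmeas : AEStronglyMeasurable G μ := by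
    refine (hrh.comp (measurable_const.prodMk measurable_id)).stronglyMeasurable
      |>.add ?_ |>.aestronglyMeasurable
    exact stronglyMeasurable_const.mul
      (hmG.comp_measurable (measurable_const.prodMk measurable_id))
  have hFint : Integrable F μ := by
    refine Integrable.mono' (integrable_const (M + γ * Vmax)) hFmeas
      (Filter.Eventually.of_forall fun a => ?_)
    calc ‖F a‖ ≤ |r (s, a)| + |γ * ∫ s', Vh (φ s') ∂(P (s, a))| := abs_add_le _ _
      _ ≤ M + γ * Vmax := by
        refine add_le_add (hM _) ?_
        rw [abs_mul, abs_of_pos hγ0]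
        exact mul_le_mul_of_nonneg_left (hbint a) hγ0.le
  have hGint : Integrable G μ := by
    refine Integrable.mono' (integrable_const (M' + γ * Vmax)) hGmeas
      (Filter.Eventually.of_forall fun a => ?_)
    calc ‖G a‖ ≤ |rh (φ s, a)| + |γ * ∫ sh', Vh sh' ∂(Ph (φ s, a))| := abs_add_le _ _
      _ ≤ M' + γ * Vmax := by
        refine add_le_add (hM' _) ?_
        rw [abs_mul, abs_of_pos hγ0]
        exact mul_le_mul_of_nonneg_left (hbint' a) hγ0.le
  -- conclude
  rw [← integral_sub hFint hGint]
  calc |∫ a, (F a - G a) ∂μ| ≤ ∫ a, |F a - G a| ∂μ := abs_int_le_int_abs _ _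
    _ ≤ ∫ _a, (εr + γ * Vmax * εP) ∂μ := by
        refine integral_mono_of_nonneg (Filter.Eventually.of_forall fun _ => abs_nonneg _)
          (integrable_const _) (Filter.Eventually.of_forall hpt)
    _ = εr + γ * Vmax * εP := by simp [μ]
end

section
/- Let α and β be metric spaces, let γ ∈ [0,1), and let T₁, T̃₁ : β → α and T₂, T̃₂ : α → β be maps, each Lipschitz with constant γ. Assume dist(T₁ y, T̃₁ y) ≤ ε₁ for all y ∈ β and dist(T₂ x, T̃₂ x) ≤ ε₂ for all x ∈ α. Suppose V ∈ α and Ṽ ∈ α satisfy (T₁ ∘ T₂) V = V and (T̃₁ ∘ T̃₂) Ṽ = Ṽ. Then dist(V, Ṽ) ≤ (ε₁ + γ·ε₂)/(1−γ²). -/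
/-- **Two-module robustness with depth discount.**
If `T₁, T̃₁ : β → α` and `T₂, T̃₂ : α → β` are all `γ`-Lipschitz (`γ < 1`), the local
module mismatches are `ε₁` and `ε₂`, and `V`, `Ṽ` are fixed points of `T₁ ∘ T₂` and
`T̃₁ ∘ T̃₂` respectively, then `dist V Ṽ ≤ (ε₁ + γ·ε₂)/(1 − γ²)`: the deeper module's
error is attenuated by one extra factor of `γ`. -/
theorem two_module_robustness
    {α β : Type*} [MetricSpace α] [MetricSpace β]
    (γ : ℝ) (hγ0 : 0 ≤ γ) (hγ1 : γ < 1)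
    (T₁ T₁' : β → α) (T₂ T₂' : α → β)
    (hT₁ : ∀ y y', dist (T₁ y) (T₁ y') ≤ γ * dist y y')
    (hT₁' : ∀ y y', dist (T₁' y) (T₁' y') ≤ γ * dist y y')
    (hT₂ : ∀ x x', dist (T₂ x) (T₂ x') ≤ γ * dist x x')
    (hT₂' : ∀ x x', dist (T₂' x) (T₂' x') ≤ γ * dist x x')
    (ε₁ ε₂ : ℝ)
    (hε₁ : ∀ y, dist (T₁ y) (T₁' y) ≤ ε₁)
    (hε₂ : ∀ x, dist (T₂ x) (T₂' x) ≤ ε₂)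
    (V V' : α) (hV : T₁ (T₂ V) = V) (hV' : T₁' (T₂' V') = V') :
    dist V V' ≤ (ε₁ + γ * ε₂) / (1 - γ ^ 2) := by
  have key : dist V V' ≤ ε₁ + γ * ε₂ + γ ^ 2 * dist V V' := by
    calc dist V V' = dist (T₁ (T₂ V)) (T₁' (T₂' V')) := by rw [hV, hV']
    _ ≤ dist (T₁ (T₂ V)) (T₁' (T₂ V)) + dist (T₁' (T₂ V)) (T₁' (T₂' V')) :=
        dist_triangle _ _ _
    _ ≤ ε₁ + γ * dist (T₂ V) (T₂' V') := add_le_add (hε₁ _) (hT₁' _ _)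
    _ ≤ ε₁ + γ * (dist (T₂ V) (T₂' V) + dist (T₂' V) (T₂' V')) := by
        gcongr; exact dist_triangle _ _ _
    _ ≤ ε₁ + γ * (ε₂ + γ * dist V V') := by
        gcongr
        · exact hε₂ _
        · exact hT₂' _ _
    _ = ε₁ + γ * ε₂ + γ ^ 2 * dist V V' := by ring
  have h1 : (0:ℝ) < 1 - γ ^ 2 := by nlinarith
  rw [le_div_iff₀ h1]
  nlinarith [dist_nonneg (x := V) (y := V')]
end
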